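/- Let U ⊆ ℍ be open, f₀, f₁ : ℝ⁴ → ℝ be C¹, f : U → ℍ be given by f(x) = f₁(x₁,x₂,x₃,x₄)e₁ + ∑ᵢ₌₂⁴ xᵢ f₀(x₁,x₂,x₃,x₄)eᵢ, and c = ∑ₖcₖeₖ ∈ U. If f is algebraic regular at c, then the limit as Δq → 0 (Δq ∈ ℍ, Δq ≠ 0) of (Δq)⁻¹·{ f(c+Δq) − f(c) + ∑ᵢ₌₂⁴ [ f←ᶜᵢ(c + (Δq)ᵢ·(e₁+e₂+e₃+e₄)) − f←ᶜᵢ(c) ] } exists and equals ∂f/∂x₁(c), where (Δq)ᵢ denotes the i-th real coordinate of Δq. (Formally: the indicated function of Δq tends to ∂f/∂x₁(c) along the punctured neighborhood filter 𝓝[≠] 0 in ℍ.) -/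

import Mathlib

open scoped Quaternion

noncomputable section

/-- The standard basis `e₁ = 1, e₂ = i, e₃ = j, e₄ = k` of the quaternions. -/
def e : Fin 4 → ℍ[ℝ] := ![1, ⟨0,1,0,0⟩, ⟨0,0,1,0⟩, ⟨0,0,0,1⟩]

/-- The real coordinates of a quaternion. -/
def toTuple (x : ℍ[ℝ]) : Fin 4 → ℝ := ![x.re, x.imI, x.imJ, x.imK]
/-- The `i`-th partial derivative of a function `g : ℝ⁴ → ℝ`. -/
def pd (g : (Fin 4 → ℝ) → ℝ) (i : Fin 4) (p : Fin 4 → ℝ) : ℝ :=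
  fderiv ℝ g p (Pi.single i 1)

/-- `f` is given on `U` by `f(x) = f₁(x₁,x₂,x₃,x₄)e₁ + ∑ₖ₌₂⁴ xₖ f₀(x₁,x₂,x₃,x₄)eₖ`. -/
def Represents (f : ℍ[ℝ] → ℍ[ℝ]) (U : Set ℍ[ℝ]) (f₀ f₁ : (Fin 4 → ℝ) → ℝ) : Prop :=
  ∀ x ∈ U, f x = f₁ (toTuple x) • e 0 + (x.imI * f₀ (toTuple x)) • e 1 +
    (x.imJ * f₀ (toTuple x)) • e 2 + (x.imK * f₀ (toTuple x)) • e 3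

/-- The generalized Cauchy–Riemann equations (ii) of algebraic regularity, at `p ∈ ℝ⁴`. -/
def RegularEqs (f₀ f₁ : (Fin 4 → ℝ) → ℝ) (p : Fin 4 → ℝ) : Prop :=
  pd f₁ 0 p = f₀ p + p 1 * pd f₀ 1 p + p 2 * pd f₀ 2 p + p 3 * pd f₀ 3 p ∧
  (∀ i : Fin 4, i ≠ 0 → pd f₁ i p = -(p i * pd f₀ 0 p)) ∧
  (∀ i j : Fin 4, i ≠ 0 → j ≠ 0 → i ≠ j → p i * pd f₀ j p = p j * pd f₀ i p)

/-- `f` is algebraic regular at `c ∈ U`. -/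
def AlgebraicRegularAt (f : ℍ[ℝ] → ℍ[ℝ]) (U : Set ℍ[ℝ]) (c : ℍ[ℝ]) : Prop :=
  ∃ f₀ f₁ : (Fin 4 → ℝ) → ℝ, ContDiff ℝ 1 f₀ ∧ ContDiff ℝ 1 f₁ ∧
    Represents f U f₀ f₁ ∧ RegularEqs f₀ f₁ (toTuple c)

/-- `f` is algebraic regular on `U`. -/
def AlgebraicRegularOn (f : ℍ[ℝ] → ℍ[ℝ]) (U : Set ℍ[ℝ]) : Prop :=
  ∀ c ∈ U, AlgebraicRegularAt f U c
/-- The function `f←ᶜ₄` (case `i = 2, j = 3` of (113)). -/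
def flFour (f₀ : (Fin 4 → ℝ) → ℝ) (c : ℍ[ℝ]) (x : ℍ[ℝ]) : ℍ[ℝ] :=
  (c.imI * f₀ ![c.re, x.imI, c.imJ, c.imK] + c.imJ * f₀ ![c.re, c.imI, x.imJ, c.imK]) • e 3 -
  ((-1 : ℝ) ^ (2 + 3) * c.imI * f₀ ![x.re, c.imI, c.imJ, c.imK] +
    c.imK * f₀ ![c.re, c.imI, x.imJ, c.imK]) • e 2 +
  ((-1 : ℝ) ^ (2 + 3) * c.imJ * f₀ ![x.re, c.imI, c.imJ, c.imK] -
    c.imK * f₀ ![c.re, x.imI, c.imJ, c.imK]) • e 1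

/-- The function `f←ᶜ₃` (case `i = 2, j = 4` of (113)). -/
def flThree (f₀ : (Fin 4 → ℝ) → ℝ) (c : ℍ[ℝ]) (x : ℍ[ℝ]) : ℍ[ℝ] :=
  (c.imI * f₀ ![c.re, x.imI, c.imJ, c.imK] + c.imK * f₀ ![c.re, c.imI, c.imJ, x.imK]) • e 2 -
  ((-1 : ℝ) ^ (2 + 4) * c.imI * f₀ ![x.re, c.imI, c.imJ, c.imK] +
    c.imJ * f₀ ![c.re, c.imI, c.imJ, x.imK]) • e 3 +
  ((-1 : ℝ) ^ (2 + 4) * c.imK * f₀ ![x.re, c.imI, c.imJ, c.imK] -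
    c.imJ * f₀ ![c.re, x.imI, c.imJ, c.imK]) • e 1

/-- The function `f←ᶜ₂` (case `i = 3, j = 4` of (113)). -/
def flTwo (f₀ : (Fin 4 → ℝ) → ℝ) (c : ℍ[ℝ]) (x : ℍ[ℝ]) : ℍ[ℝ] :=
  (c.imJ * f₀ ![c.re, c.imI, x.imJ, c.imK] + c.imK * f₀ ![c.re, c.imI, c.imJ, x.imK]) • e 1 -
  ((-1 : ℝ) ^ (3 + 4) * c.imJ * f₀ ![x.re, c.imI, c.imJ, c.imK] +
    c.imI * f₀ ![c.re, c.imI, c.imJ, x.imK]) • e 3 +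
  ((-1 : ℝ) ^ (3 + 4) * c.imK * f₀ ![x.re, c.imI, c.imJ, c.imK] -
    c.imI * f₀ ![c.re, c.imI, x.imJ, c.imK]) • e 2

/-- The left difference quotient of Proposition 4.1 (ii). -/
def leftQuot (f : ℍ[ℝ] → ℍ[ℝ]) (f₀ : (Fin 4 → ℝ) → ℝ) (c : ℍ[ℝ]) (Δq : ℍ[ℝ]) : ℍ[ℝ] :=
  (Δq)⁻¹ *
    (f (c + Δq) - f c +
      (flTwo f₀ c (c + Δq.imI • (e 0 + e 1 + e 2 + e 3)) - flTwo f₀ c c) +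
      (flThree f₀ c (c + Δq.imJ • (e 0 + e 1 + e 2 + e 3)) - flThree f₀ c c) +
      (flFour f₀ c (c + Δq.imK • (e 0 + e 1 + e 2 + e 3)) - flFour f₀ c c))

/-!
Near `c` the function `f` is given by `f₀, f₁`, and each correction `f←ᶜₘ(c + t(e₁+e₂+e₃+e₄))`
depends on `t` only through the values of `f₀` on the coordinate lines through `c`. Hence the
numerator `N(Δq)` of the quotient vanishes at `0` and is differentiable there, with derivative
`L = Df(c) + ∑ₖ (Δq)ₖ δₖ` for explicit quaternions `δₖ`. The generalized Cauchy–Riemann equations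
are exactly what makes `L` the right multiplication `v ↦ v · ∂f/∂x₁(c)`, and then
`‖v⁻¹ N(v) - ∂f/∂x₁(c)‖ = ‖N(v) - L v‖ / ‖v‖ → 0`.

The equations are assumed for some representation `(g₀, g₁)` of `f`, but all representations agree
near `c`: `f₁ = g₁` outright, and `f₀ = g₀` off the hyperplane `x₂ = 0`, hence everywhere by
continuity.
-/

open Filter Topology Set

theorem tendsto_inv_mul_of_hasFDerivAt {𝕜 A : Type*} [NontriviallyNormedField 𝕜]
    [NormedDivisionRing A] [NormedAlgebra 𝕜 A] {N : A → A} {a : A}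
    (hN : HasFDerivAt N ((ContinuousLinearMap.mul 𝕜 A).flip a) 0) (h0 : N 0 = 0) :
    Tendsto (fun v => v⁻¹ * N v) (𝓝[≠] 0) (𝓝 a) := by
  have ho : (fun v => N v - v * a) =o[𝓝 0] fun v => v := by simpa [h0] using hN.isLittleO
  rw [tendsto_iff_norm_sub_tendsto_zero]
  refine (ho.norm_norm.tendsto_div_nhds_zero.mono_left nhdsWithin_le_nhds).congr' ?_
  filter_upwards [self_mem_nhdsWithin] with v (hv : v ≠ 0)
  rw [div_eq_inv_mul, ← norm_inv, ← norm_mul, mul_sub, inv_mul_cancel_left₀ hv]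

@[simp] lemma e_zero : e 0 = 1 := rfl
@[simp] lemma e_one : (e 1).re = 0 ∧ (e 1).imI = 1 ∧ (e 1).imJ = 0 ∧ (e 1).imK = 0 :=
  ⟨rfl, rfl, rfl, rfl⟩
@[simp] lemma e_two : (e 2).re = 0 ∧ (e 2).imI = 0 ∧ (e 2).imJ = 1 ∧ (e 2).imK = 0 :=
  ⟨rfl, rfl, rfl, rfl⟩
@[simp] lemma e_three : (e 3).re = 0 ∧ (e 3).imI = 0 ∧ (e 3).imJ = 0 ∧ (e 3).imK = 1 :=
  ⟨rfl, rfl, rfl, rfl⟩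

def toTupleCLE : ℍ[ℝ] ≃L[ℝ] (Fin 4 → ℝ) :=
  LinearEquiv.toContinuousLinearEquiv (E := ℍ[ℝ])
    (QuaternionAlgebra.linearEquivTuple (-1 : ℝ) 0 (-1))

@[simp] lemma coe_toTupleCLE : ⇑toTupleCLE = toTuple := rfl

def coordCLM (i : Fin 4) : ℍ[ℝ] →L[ℝ] ℝ :=
  (ContinuousLinearMap.proj i).comp (toTupleCLE : ℍ[ℝ] →L[ℝ] (Fin 4 → ℝ))

@[simp] lemma coordCLM_apply (i : Fin 4) (x : ℍ[ℝ]) : coordCLM i x = toTuple x i := rfl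

@[simp] lemma toTuple_apply_zero (x : ℍ[ℝ]) : toTuple x 0 = x.re := rfl
@[simp] lemma toTuple_apply_one (x : ℍ[ℝ]) : toTuple x 1 = x.imI := rfl
@[simp] lemma toTuple_apply_two (x : ℍ[ℝ]) : toTuple x 2 = x.imJ := rfl
@[simp] lemma toTuple_apply_three (x : ℍ[ℝ]) : toTuple x 3 = x.imK := rfl

lemma toTuple_e (i : Fin 4) : toTuple (e i) = Pi.single i 1 := by
  ext j; fin_cases i <;> fin_cases j <;> rfl

lemma fderiv_apply_eq_sum_pd (g : (Fin 4 → ℝ) → ℝ) (p y : Fin 4 → ℝ) :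
    fderiv ℝ g p y = ∑ i, y i * pd g i p := by
  conv_lhs => rw [← Finset.univ_sum_single y]
  refine (map_sum _ _ _).trans (Finset.sum_congr rfl fun i _ => ?_)
  rw [pd, ← smul_eq_mul, ← map_smul, ← Pi.single_smul', smul_eq_mul, mul_one]

lemma Filter.EventuallyEq.pd_eq {g h : (Fin 4 → ℝ) → ℝ} {p : Fin 4 → ℝ} (hgh : g =ᶠ[𝓝 p] h)
    (i : Fin 4) : pd g i p = pd h i p := by
  rw [pd, pd, hgh.fderiv_eq]

lemma RegularEqs.congr {f₀ f₁ g₀ g₁ : (Fin 4 → ℝ) → ℝ} {p : Fin 4 → ℝ}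
    (h₀ : f₀ =ᶠ[𝓝 p] g₀) (h₁ : f₁ =ᶠ[𝓝 p] g₁) (hg : RegularEqs g₀ g₁ p) :
    RegularEqs f₀ f₁ p := by
  simpa only [RegularEqs, h₀.pd_eq, h₁.pd_eq, h₀.eq_of_nhds] using hg

lemma Represents.eventuallyEq {f : ℍ[ℝ] → ℍ[ℝ]} {U : Set ℍ[ℝ]} {f₀ f₁ g₀ g₁ : (Fin 4 → ℝ) → ℝ}
    (hU : IsOpen U) (hf : Represents f U f₀ f₁) (hg : Represents f U g₀ g₁)
    (hf₀ : Continuous f₀) (hg₀ : Continuous g₀) {c : ℍ[ℝ]} (hc : c ∈ U) :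
    f₀ =ᶠ[𝓝 (toTuple c)] g₀ ∧ f₁ =ᶠ[𝓝 (toTuple c)] g₁ := by
  have hV : IsOpen (toTupleCLE.symm ⁻¹' U) := hU.preimage toTupleCLE.symm.continuous
  have hcV : toTuple c ∈ toTupleCLE.symm ⁻¹' U := by
    simpa [← coe_toTupleCLE] using hc
  have hcoord : ∀ y ∈ toTupleCLE.symm ⁻¹' U, f₁ y = g₁ y ∧ y 1 * f₀ y = y 1 * g₀ y := by
    intro y hy
    have h := (hf _ hy).symm.trans (hg _ hy)
    rw [← coe_toTupleCLE, toTupleCLE.apply_symm_apply] at h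
    have hy₁ : (toTupleCLE.symm y).imI = y 1 := congrFun (toTupleCLE.apply_symm_apply y) 1
    exact ⟨by simpa using congrArg (·.re) h, by simpa [hy₁] using congrArg (·.imI) h⟩
  have hdense : Dense {y : Fin 4 → ℝ | y 1 ≠ 0} :=
    (dense_compl_singleton (0 : ℝ)).preimage (isOpenMap_eval 1)
  have hV₀ : EqOn f₀ g₀ (toTupleCLE.symm ⁻¹' U) :=
    EqOn.of_subset_closure (fun y hy => mul_left_cancel₀ hy.2 (hcoord y hy.1).2)
      hf₀.continuousOn hg₀.continuousOn inter_subset_left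
      (hdense.open_subset_closure_inter hV)
  exact ⟨eventuallyEq_of_mem (hV.mem_nhds hcV) hV₀,
    eventuallyEq_of_mem (hV.mem_nhds hcV) fun y hy => (hcoord y hy).1⟩

section Representation

variable (f₀ f₁ : (Fin 4 → ℝ) → ℝ) (c : ℍ[ℝ])

def reprDeriv : ℍ[ℝ] →L[ℝ] ℍ[ℝ] :=
  let D₀ := (fderiv ℝ f₀ (toTuple c)).comp (toTupleCLE : ℍ[ℝ] →L[ℝ] (Fin 4 → ℝ))
  let D₁ := (fderiv ℝ f₁ (toTuple c)).comp (toTupleCLE : ℍ[ℝ] →L[ℝ] (Fin 4 → ℝ))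
  D₁.smulRight (e 0) + (c.imI • D₀ + f₀ (toTuple c) • coordCLM 1).smulRight (e 1) +
    (c.imJ • D₀ + f₀ (toTuple c) • coordCLM 2).smulRight (e 2) +
    (c.imK • D₀ + f₀ (toTuple c) • coordCLM 3).smulRight (e 3)

lemma reprDeriv_apply (v : ℍ[ℝ]) :
    reprDeriv f₀ f₁ c v = fderiv ℝ f₁ (toTuple c) (toTuple v) • e 0 +
      (c.imI * fderiv ℝ f₀ (toTuple c) (toTuple v) + f₀ (toTuple c) * v.imI) • e 1 +
      (c.imJ * fderiv ℝ f₀ (toTuple c) (toTuple v) + f₀ (toTuple c) * v.imJ) • e 2 +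
      (c.imK * fderiv ℝ f₀ (toTuple c) (toTuple v) + f₀ (toTuple c) * v.imK) • e 3 := by
  simp [reprDeriv]

variable {f₀ f₁ c}

lemma Represents.hasFDerivAt {f : ℍ[ℝ] → ℍ[ℝ]} {U : Set ℍ[ℝ]} (hf : Represents f U f₀ f₁)
    (hU : IsOpen U) (hc : c ∈ U) (hf₀ : DifferentiableAt ℝ f₀ (toTuple c))
    (hf₁ : DifferentiableAt ℝ f₁ (toTuple c)) :
    HasFDerivAt f (reprDeriv f₀ f₁ c) c := by
  have hT := toTupleCLE.hasFDerivAt (x := c)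
  have h₀ := hf₀.hasFDerivAt.comp c hT
  have h₁ := hf₁.hasFDerivAt.comp c hT
  refine HasFDerivAt.congr_of_eventuallyEq ?_ (eventuallyEq_of_mem (hU.mem_nhds hc) hf)
  exact (((h₁.smul_const (e 0)).add (((coordCLM 1).hasFDerivAt.mul h₀).smul_const (e 1))).add
    (((coordCLM 2).hasFDerivAt.mul h₀).smul_const (e 2))).add
    (((coordCLM 3).hasFDerivAt.mul h₀).smul_const (e 3))

end Representation

section LeftCorrections

variable (f₀ : (Fin 4 → ℝ) → ℝ) (c : ℍ[ℝ])

def lineValues (t : ℝ) : Fin 4 → ℝ := fun i => f₀ (toTuple (c + t • e i))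

/-- The right-hand side of (113) for `f←ᶜₘ`, as a function of the values `w k` of `f₀` on the
coordinate lines through `c`; indices are `0`-based and `σ = (-1)^(i+j)`. -/
def flLinear (σ : ℝ) (i j m : Fin 4) : (Fin 4 → ℝ) →L[ℝ] ℍ[ℝ] :=
  let π := fun k => ContinuousLinearMap.proj (R := ℝ) (φ := fun _ : Fin 4 => ℝ) k
  (toTuple c i • π i + toTuple c j • π j).smulRight (e m) -
    ((σ * toTuple c i) • π 0 + toTuple c m • π j).smulRight (e j) +
    ((σ * toTuple c j) • π 0 - toTuple c m • π i).smulRight (e i)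

@[simp] lemma flLinear_apply (σ : ℝ) (i j m : Fin 4) (w : Fin 4 → ℝ) :
    flLinear c σ i j m w = (toTuple c i * w i + toTuple c j * w j) • e m -
      (σ * toTuple c i * w 0 + toTuple c m * w j) • e j +
      (σ * toTuple c j * w 0 - toTuple c m * w i) • e i := by
  simp [flLinear, mul_assoc]

lemma flTwo_add_smul (t : ℝ) :
    flTwo f₀ c (c + t • (e 0 + e 1 + e 2 + e 3)) =
      flLinear c ((-1) ^ (3 + 4)) 2 3 1 (lineValues f₀ c t) := by
  simp [flTwo, lineValues, toTuple]

lemma flThree_add_smul (t : ℝ) :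
    flThree f₀ c (c + t • (e 0 + e 1 + e 2 + e 3)) =
      flLinear c ((-1) ^ (2 + 4)) 1 3 2 (lineValues f₀ c t) := by
  simp [flThree, lineValues, toTuple]

lemma flFour_add_smul (t : ℝ) :
    flFour f₀ c (c + t • (e 0 + e 1 + e 2 + e 3)) =
      flLinear c ((-1) ^ (2 + 3)) 1 2 3 (lineValues f₀ c t) := by
  simp [flFour, lineValues, toTuple]

variable {f₀ c}

lemma hasDerivAt_lineValues (hf₀ : DifferentiableAt ℝ f₀ (toTuple c)) :
    HasDerivAt (lineValues f₀ c) (fun i => pd f₀ i (toTuple c)) 0 := by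
  refine hasDerivAt_pi.2 fun i => ?_
  have hline : HasDerivAt (fun t : ℝ => toTuple (c + t • e i)) (Pi.single i 1) 0 := by
    refine (toTupleCLE.hasFDerivAt.comp_hasDerivAt (0 : ℝ)
      (((hasDerivAt_id (0 : ℝ)).smul_const (e i)).const_add c)).congr_deriv ?_
    simp [toTuple_e]
  have hf₀' : HasFDerivAt f₀ (fderiv ℝ f₀ (toTuple c)) (toTuple (c + (0 : ℝ) • e i)) := by
    simpa using hf₀.hasFDerivAt
  exact hf₀'.comp_hasDerivAt 0 hline

lemma hasFDerivAt_comp_lineValues (hf₀ : DifferentiableAt ℝ f₀ (toTuple c))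
    (L : (Fin 4 → ℝ) →L[ℝ] ℍ[ℝ]) (k : Fin 4) :
    HasFDerivAt (fun Δq : ℍ[ℝ] => L (lineValues f₀ c (toTuple Δq k)))
      ((coordCLM k).smulRight (L fun i => pd f₀ i (toTuple c))) 0 := by
  have hL : HasFDerivAt (L ∘ lineValues f₀ c)
      (ContinuousLinearMap.toSpanSingleton ℝ (L fun i => pd f₀ i (toTuple c))) (coordCLM k 0) := by
    rw [map_zero]
    exact (L.hasFDerivAt.comp_hasDerivAt 0 (hasDerivAt_lineValues hf₀)).hasFDerivAt
  exact (hL.comp 0 (coordCLM k).hasFDerivAt).congr_fderiv (ContinuousLinearMap.ext fun v => by simp)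

end LeftCorrections

section Numerator

variable (f : ℍ[ℝ] → ℍ[ℝ]) (f₀ : (Fin 4 → ℝ) → ℝ) (c : ℍ[ℝ])

def leftQuotNumerator (Δq : ℍ[ℝ]) : ℍ[ℝ] :=
  f (c + Δq) - f c +
    (flTwo f₀ c (c + Δq.imI • (e 0 + e 1 + e 2 + e 3)) - flTwo f₀ c c) +
    (flThree f₀ c (c + Δq.imJ • (e 0 + e 1 + e 2 + e 3)) - flThree f₀ c c) +
    (flFour f₀ c (c + Δq.imK • (e 0 + e 1 + e 2 + e 3)) - flFour f₀ c c)

lemma leftQuotNumerator_zero : leftQuotNumerator f f₀ c 0 = 0 := by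
  simp [leftQuotNumerator]

variable {f f₀ c}

lemma hasFDerivAt_leftQuotNumerator {D : ℍ[ℝ] →L[ℝ] ℍ[ℝ]} (hf : HasFDerivAt f D c)
    (hf₀ : DifferentiableAt ℝ f₀ (toTuple c)) :
    HasFDerivAt (leftQuotNumerator f f₀ c)
      (D + (coordCLM 1).smulRight (flLinear c ((-1) ^ (3 + 4)) 2 3 1 fun i => pd f₀ i (toTuple c)) +
        (coordCLM 2).smulRight (flLinear c ((-1) ^ (2 + 4)) 1 3 2 fun i => pd f₀ i (toTuple c)) +
        (coordCLM 3).smulRight (flLinear c ((-1) ^ (2 + 3)) 1 2 3 fun i => pd f₀ i (toTuple c)))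
      0 := by
  have hshift : HasFDerivAt (fun Δq => f (c + Δq)) D 0 := by
    rw [← add_zero c] at hf
    exact (hf.comp 0 ((hasFDerivAt_id 0).const_add c)).congr_fderiv D.comp_id
  have hTwo := hasFDerivAt_comp_lineValues hf₀ (flLinear c ((-1) ^ (3 + 4)) 2 3 1) 1
  have hThree := hasFDerivAt_comp_lineValues hf₀ (flLinear c ((-1) ^ (2 + 4)) 1 3 2) 2
  have hFour := hasFDerivAt_comp_lineValues hf₀ (flLinear c ((-1) ^ (2 + 3)) 1 2 3) 3
  simp only [← flTwo_add_smul, ← flThree_add_smul, ← flFour_add_smul, toTuple_apply_one,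
    toTuple_apply_two, toTuple_apply_three] at hTwo hThree hFour
  exact (((hshift.sub_const _).add (hTwo.sub_const _)).add (hThree.sub_const _)).add
    (hFour.sub_const _)

end Numerator

lemma reprDeriv_add_smul_flLinear_eq_mul {f₀ f₁ : (Fin 4 → ℝ) → ℝ} {c : ℍ[ℝ]}
    (hreg : RegularEqs f₀ f₁ (toTuple c)) (v : ℍ[ℝ]) :
    reprDeriv f₀ f₁ c v +
      v.imI • flLinear c ((-1) ^ (3 + 4)) 2 3 1 (fun i => pd f₀ i (toTuple c)) +
      v.imJ • flLinear c ((-1) ^ (2 + 4)) 1 3 2 (fun i => pd f₀ i (toTuple c)) +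
      v.imK • flLinear c ((-1) ^ (2 + 3)) 1 2 3 (fun i => pd f₀ i (toTuple c)) =
      v * reprDeriv f₀ f₁ c 1 := by
  obtain ⟨h0, hx, hxy⟩ := hreg
  have h1 := hx 1 (by decide)
  have h2 := hx 2 (by decide)
  have h3 := hx 3 (by decide)
  have h12 := hxy 1 2 (by decide) (by decide) (by decide)
  have h13 := hxy 1 3 (by decide) (by decide) (by decide)
  have h23 := hxy 2 3 (by decide) (by decide) (by decide)
  simp only [toTuple_apply_one, toTuple_apply_two, toTuple_apply_three] at h0 h1 h2 h3 h12 h13 h23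
  simp only [reprDeriv_apply, fderiv_apply_eq_sum_pd, Fin.sum_univ_four]
  ext <;> simp only [flLinear_apply, e_zero, e_one, e_two, e_three, toTuple_apply_zero,
    toTuple_apply_one, toTuple_apply_two, toTuple_apply_three, smul_eq_mul, Quaternion.re_add,
    Quaternion.re_sub, Quaternion.re_smul, Quaternion.re_one, Quaternion.re_mul, Quaternion.imI_add,
    Quaternion.imI_sub, Quaternion.imI_smul, Quaternion.imI_one, Quaternion.imI_mul,
    Quaternion.imJ_add, Quaternion.imJ_sub, Quaternion.imJ_smul, Quaternion.imJ_one,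
    Quaternion.imJ_mul, Quaternion.imK_add, Quaternion.imK_sub, Quaternion.imK_smul,
    Quaternion.imK_one, Quaternion.imK_mul]
  · linear_combination v.imI * h1 + v.imJ * h2 + v.imK * h3
  · linear_combination -v.imI * h0 + v.imJ * h12 + v.imK * h13
  · linear_combination -v.imI * h12 - v.imJ * h0 + v.imK * h23
  · linear_combination -v.imI * h13 - v.imJ * h23 - v.imK * h0

/-- if `f` is algebraic regular at `c`, the left difference quotient
tends to `∂f/∂x₁(c)` as `Δq → 0`. -/
theorem tendsto_leftQuot_of_algebraicRegularAt (U : Set ℍ[ℝ]) (hU : IsOpen U)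
    (f : ℍ[ℝ] → ℍ[ℝ]) (f₀ f₁ : (Fin 4 → ℝ) → ℝ)
    (hf₀ : ContDiff ℝ 1 f₀) (hf₁ : ContDiff ℝ 1 f₁)
    (hf : Represents f U f₀ f₁) (c : ℍ[ℝ]) (hc : c ∈ U)
    (hreg : AlgebraicRegularAt f U c) :
    Filter.Tendsto (leftQuot f f₀ c) (nhdsWithin 0 {q : ℍ[ℝ] | q ≠ 0})
      (nhds (fderiv ℝ f c (e 0))) := by
  obtain ⟨g₀, g₁, hg₀, -, hg, hgreg⟩ := hreg
  obtain ⟨h₀, h₁⟩ := hf.eventuallyEq hU hg hf₀.continuous hg₀.continuous hc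
  have hf₀c := hf₀.differentiable one_ne_zero (toTuple c)
  have hD := hf.hasFDerivAt hU hc hf₀c (hf₁.differentiable one_ne_zero _)
  rw [hD.fderiv, e_zero]
  refine tendsto_inv_mul_of_hasFDerivAt ((hasFDerivAt_leftQuotNumerator hD hf₀c).congr_fderiv ?_)
    (leftQuotNumerator_zero f f₀ c)
  exact ContinuousLinearMap.ext (reprDeriv_add_smul_flLinear_eq_mul (hgreg.congr h₀ h₁))
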